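/- Fix θ ∈ (1/2, 5/2). There exists a constant C such that for all k ∈ ℕ with k ≥ 1, Σ_{ℓ ≥ 1, ℓ ≠ k} ℓ^{4-2θ} / ((ℓ-k)²(ℓ+k)²) ≤ C (1 + k²)^{1-θ}. -/

import Mathlib

/-!
Split the sum according to whether `ℓ` is comparable to `k`. For `k/2 ≤ ℓ ≤ 2k` one has
`ℓ^(4-2θ)/(ℓ+k)² ≤ 2^|4-2θ| k^(2-2θ)`, and what remains is `∑ 1/(ℓ-k)² ≤ ∑_{n ∈ ℤ} 1/n²`.
Otherwise the denominator is at least `max(ℓ,k)⁴/4` and the term is at most `4 k^(2-2θ) ℓ^(-p)`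
with `p = 2 min(θ, 1) > 1`, a summable majorant. Finally `k^(2-2θ) ≤ 2^|1-θ| (1+k²)^(1-θ)`.
-/

open Real

lemma rpow_le_two_rpow_abs_mul_rpow {x y a : ℝ} (hy : 0 < y) (hyx : y ≤ 2 * x)
    (hxy : x ≤ 2 * y) : x ^ a ≤ 2 ^ |a| * y ^ a := by
  have hx : 0 < x := by linarith
  have hlog : |log (x / y)| ≤ log 2 := by
    rw [abs_le, ← log_inv, ← one_div]
    constructor
    · exact log_le_log (by norm_num) (by rw [le_div_iff₀ hy]; linarith)
    · exact log_le_log (by positivity) (by rw [div_le_iff₀ hy]; linarith)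
  have hratio : (x / y) ^ a ≤ 2 ^ |a| := by
    rw [rpow_def_of_pos (by positivity), rpow_def_of_pos two_pos, exp_le_exp]
    calc log (x / y) * a ≤ |log (x / y)| * |a| := by rw [← abs_mul]; exact le_abs_self _
      _ ≤ log 2 * |a| := by gcongr
  calc x ^ a = (x / y) ^ a * y ^ a := by
        rw [div_rpow hx.le hy.le, div_mul_cancel₀ _ (rpow_pos_of_pos hy a).ne']
    _ ≤ 2 ^ |a| * y ^ a := by gcongr

lemma rpow_div_sq_mul_sq_le_of_near {x y a : ℝ} (hy : 0 < y) (hyx : y ≤ 2 * x)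
    (hxy : x ≤ 2 * y) :
    x ^ a / ((x - y) ^ 2 * (x + y) ^ 2) ≤ 2 ^ |a| * y ^ (a - 2) / (x - y) ^ 2 := by
  rcases eq_or_ne x y with rfl | hne
  · simp -- both sides are `0` by the convention `x / 0 = 0`
  have hd : 0 < (x - y) ^ 2 := by positivity [sub_ne_zero.2 hne]
  calc x ^ a / ((x - y) ^ 2 * (x + y) ^ 2) ≤ 2 ^ |a| * y ^ a / ((x - y) ^ 2 * y ^ 2) := by
        gcongr
        · exact rpow_le_two_rpow_abs_mul_rpow hy hyx hxy
        · nlinarith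
    _ = 2 ^ |a| * y ^ (a - 2) / (x - y) ^ 2 := by
        rw [rpow_sub hy, rpow_two]; field_simp

lemma rpow_div_sq_mul_sq_le_of_two_mul_le {x y a p : ℝ} (hx : 0 < x) (hy : 1 ≤ y)
    (hxy : 2 * x ≤ y) (hap : 0 ≤ a + p) (hp : p ≤ 2) :
    x ^ a / ((x - y) ^ 2 * (x + y) ^ 2) ≤ 4 * y ^ (a - 2) * (x ^ p)⁻¹ := by
  have hy0 : 0 < y := by linarith
  have key : x ^ (a + p) ≤ y ^ (a - 2) * y ^ (4 : ℝ) :=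
    calc x ^ (a + p) ≤ y ^ (a + p) := by gcongr; linarith
      _ ≤ y ^ (a + 2) := by gcongr
      _ = y ^ (a - 2) * y ^ (4 : ℝ) := by rw [← rpow_add hy0]; ring_nf
  calc x ^ a / ((x - y) ^ 2 * (x + y) ^ 2) ≤ x ^ a / (y ^ (4 : ℝ) / 4) := by
        gcongr
        rw [rpow_ofNat]
        nlinarith [mul_le_mul (show (y / 2) ^ 2 ≤ (x - y) ^ 2 by nlinarith)
          (show y ^ 2 ≤ (x + y) ^ 2 by nlinarith) (by positivity) (sq_nonneg (x - y))]
    _ = 4 * x ^ (a + p) / y ^ (4 : ℝ) * (x ^ p)⁻¹ := by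
        rw [rpow_add hx]; field_simp
    _ ≤ 4 * (y ^ (a - 2) * y ^ (4 : ℝ)) / y ^ (4 : ℝ) * (x ^ p)⁻¹ := by gcongr
    _ = 4 * y ^ (a - 2) * (x ^ p)⁻¹ := by field_simp

lemma rpow_div_sq_mul_sq_le_of_le_two_mul {x y a p : ℝ} (hy : 1 ≤ y) (hxy : 2 * y ≤ x)
    (hap : a + p ≤ 4) (hp : p ≤ 2) :
    x ^ a / ((x - y) ^ 2 * (x + y) ^ 2) ≤ 4 * y ^ (a - 2) * (x ^ p)⁻¹ := by
  have hy_le_x : y ≤ x := by linarith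
  have hx : 0 < x := by linarith
  calc x ^ a / ((x - y) ^ 2 * (x + y) ^ 2) ≤ x ^ a / (x ^ (4 : ℝ) / 4) := by
        gcongr
        rw [rpow_ofNat]
        nlinarith [mul_le_mul (show (x / 2) ^ 2 ≤ (x - y) ^ 2 by nlinarith)
          (show x ^ 2 ≤ (x + y) ^ 2 by nlinarith) (by positivity) (sq_nonneg (x - y))]
    _ = 4 * x ^ (a + p - 4) * (x ^ p)⁻¹ := by
        rw [rpow_sub hx, rpow_add hx]; field_simp
    _ ≤ 4 * y ^ (a + p - 4) * (x ^ p)⁻¹ := by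
        gcongr 4 * ?_ * _
        exact rpow_le_rpow_of_nonpos (by linarith) hy_le_x (by linarith)
    _ ≤ 4 * y ^ (a - 2) * (x ^ p)⁻¹ := by
        gcongr 4 * ?_ * _
        exact rpow_le_rpow_of_exponent_le hy (by linarith)

lemma rpow_two_mul_le_two_rpow_abs_mul_one_add_sq {x : ℝ} (hx : 1 ≤ x) (s : ℝ) :
    x ^ (2 * s) ≤ 2 ^ |s| * (1 + x ^ 2) ^ s := by
  rw [show (2 : ℝ) * s = ((2 : ℕ) : ℝ) * s by norm_num, rpow_natCast_mul (by linarith)]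
  exact rpow_le_two_rpow_abs_mul_rpow (by positivity) (by nlinarith) (by nlinarith)

lemma ite_rpow_div_sq_mul_sq_le {a p : ℝ} (hap₀ : 0 ≤ a + p) (hap₄ : a + p ≤ 4) (hp : p ≤ 2)
    {k : ℕ} (hk : 1 ≤ k) (l : ℕ) :
    (if 1 ≤ l ∧ l ≠ k then (l : ℝ) ^ a / (((l : ℝ) - k) ^ 2 * ((l : ℝ) + k) ^ 2) else 0) ≤
      2 ^ |a| * (k : ℝ) ^ (a - 2) * (((l : ℝ) - k) ^ 2)⁻¹ +
        4 * (k : ℝ) ^ (a - 2) * ((l : ℝ) ^ p)⁻¹ := by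
  have hk' : (1 : ℝ) ≤ k := by exact_mod_cast hk
  have hnear : 0 ≤ 2 ^ |a| * (k : ℝ) ^ (a - 2) * (((l : ℝ) - k) ^ 2)⁻¹ := by positivity
  have hfar : 0 ≤ 4 * (k : ℝ) ^ (a - 2) * ((l : ℝ) ^ p)⁻¹ := by positivity
  split_ifs with hl
  · have hl' : (1 : ℝ) ≤ l := by exact_mod_cast hl.1
    rcases le_or_gt (2 * (l : ℝ)) k with hlk | hlk
    · linarith [rpow_div_sq_mul_sq_le_of_two_mul_le (by linarith) hk' hlk hap₀ hp]
    rcases le_or_gt (2 * (k : ℝ)) l with hkl | hkl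
    · linarith [rpow_div_sq_mul_sq_le_of_le_two_mul (a := a) hk' hkl hap₄ hp]
    · linarith [(rpow_div_sq_mul_sq_le_of_near (a := a) (by linarith) hlk.le hkl.le).trans_eq
        (div_eq_mul_inv _ _)]
  · positivity

lemma summable_int_inv_sq : Summable fun n : ℤ ↦ ((n : ℝ) ^ 2)⁻¹ := by
  simpa only [one_div] using summable_one_div_int_pow.2 one_lt_two

lemma natCast_sub_injective (k : ℤ) : Function.Injective fun l : ℕ ↦ (l : ℤ) - k :=
  fun _ _ h ↦ by simpa using h

lemma summable_inv_sq_natCast_sub (k : ℤ) : Summable fun l : ℕ ↦ (((l : ℝ) - k) ^ 2)⁻¹ := by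
  simpa [Function.comp_def] using summable_int_inv_sq.comp_injective (natCast_sub_injective k)

lemma tsum_inv_sq_natCast_sub_le (k : ℤ) :
    ∑' l : ℕ, (((l : ℝ) - k) ^ 2)⁻¹ ≤ ∑' n : ℤ, ((n : ℝ) ^ 2)⁻¹ := by
  simpa [Function.comp_def] using
    tsum_comp_le_tsum_of_inj summable_int_inv_sq (fun _ ↦ by positivity) (natCast_sub_injective k)

/-- the key summation estimate: for `θ ∈ (1/2, 5/2)` there is `C` with
`Σ_{ℓ ≥ 1, ℓ ≠ k} ℓ^{4-2θ}/((ℓ-k)²(ℓ+k)²) ≤ C (1+k²)^{1-θ}` for all `k ≥ 1`. -/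
theorem sum_estimate_neumann_derivative (θ : ℝ) (hθ : θ ∈ Set.Ioo (1/2 : ℝ) (5/2)) :
    ∃ C : ℝ, ∀ k : ℕ, 1 ≤ k →
      (∑' l : ℕ, if 1 ≤ l ∧ l ≠ k then
          (l : ℝ) ^ (4 - 2 * θ) / (((l : ℝ) - (k : ℝ)) ^ 2 * ((l : ℝ) + (k : ℝ)) ^ 2)
        else 0)
        ≤ C * (1 + (k : ℝ) ^ 2) ^ (1 - θ) := by
  obtain ⟨hθ₁, hθ₂⟩ := hθ
  set a := 4 - 2 * θ
  set p := 2 * min θ 1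
  have hp₁ : 1 < p := by linarith [lt_min hθ₁ (by norm_num : (1 / 2 : ℝ) < 1)]
  have hap₀ : 0 ≤ a + p := by linarith [le_min (by linarith : θ - 2 ≤ θ) (by linarith : θ - 2 ≤ 1)]
  have hap₄ : a + p ≤ 4 := by linarith [min_le_left θ 1]
  have hp₂ : p ≤ 2 := by linarith [min_le_right θ 1]
  have hT : Summable fun l : ℕ ↦ ((l : ℝ) ^ p)⁻¹ := summable_nat_rpow_inv.2 hp₁
  refine ⟨2 ^ |1 - θ| * (2 ^ |a| * ∑' n : ℤ, ((n : ℝ) ^ 2)⁻¹ + 4 * ∑' l : ℕ, ((l : ℝ) ^ p)⁻¹),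
    fun k hk ↦ ?_⟩
  have hk' : (1 : ℝ) ≤ k := by exact_mod_cast hk
  have hS : Summable fun l : ℕ ↦ (((l : ℝ) - k) ^ 2)⁻¹ := by
    exact_mod_cast summable_inv_sq_natCast_sub k
  have hS_le : ∑' l : ℕ, (((l : ℝ) - k) ^ 2)⁻¹ ≤ ∑' n : ℤ, ((n : ℝ) ^ 2)⁻¹ := by
    exact_mod_cast tsum_inv_sq_natCast_sub_le k
  have hle := ite_rpow_div_sq_mul_sq_le hap₀ hap₄ hp₂ hk
  have hmaj := (hS.mul_left (2 ^ |a| * (k : ℝ) ^ (a - 2))).add (hT.mul_left (4 * (k : ℝ) ^ (a - 2)))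
  calc _ ≤ ∑' l : ℕ, (2 ^ |a| * (k : ℝ) ^ (a - 2) * (((l : ℝ) - k) ^ 2)⁻¹ +
          4 * (k : ℝ) ^ (a - 2) * ((l : ℝ) ^ p)⁻¹) :=
        (hmaj.of_nonneg_of_le (fun l ↦ by split_ifs <;> positivity) hle).tsum_le_tsum hle hmaj
    _ = (k : ℝ) ^ (2 * (1 - θ)) * (2 ^ |a| * ∑' l : ℕ, (((l : ℝ) - k) ^ 2)⁻¹ +
          4 * ∑' l : ℕ, ((l : ℝ) ^ p)⁻¹) := by
        rw [hS.mul_left _ |>.tsum_add (hT.mul_left _), tsum_mul_left, tsum_mul_left,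
          show a - 2 = 2 * (1 - θ) by ring]
        ring
    _ ≤ 2 ^ |1 - θ| * (1 + (k : ℝ) ^ 2) ^ (1 - θ) * (2 ^ |a| * ∑' n : ℤ, ((n : ℝ) ^ 2)⁻¹ +
          4 * ∑' l : ℕ, ((l : ℝ) ^ p)⁻¹) := by
        gcongr
        exact rpow_two_mul_le_two_rpow_abs_mul_one_add_sq hk' _
    _ = _ := by ring
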